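/- arXiv:2303.10068 — 2 statements merged into one kernel-verified Lean document; each statement's English description precedes it below -/
import Mathlib

section
/- If f : Set V → ℝ≥0 is monotone and submodular with f(∅) = 0, and P_greedy of size k is constructed by greedily adding at each step an element maximizing the marginal gain, then f(P_greedy) ≥ (1 − 1/e)·f(P*) where P* is any set of size at most k maximizing f. -/
theorem greedy_guarantee {V : Type*} [DecidableEq V] [Fintype V]
    (f : Finset V → ℝ) (k : ℕ) (hk : 0 < k)
    (hnonneg : ∀ A, 0 ≤ f A)
    (hmono : ∀ A B : Finset V, A ⊆ B → f A ≤ f B)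
    (hsub : ∀ A B : Finset V, f A + f B ≥ f (A ∪ B) + f (A ∩ B))
    (hempty : f ∅ = 0)
    (P : ℕ → Finset V) (hP0 : P 0 = ∅)
    (hstep : ∀ i < k, ∃ v ∉ P i, P (i + 1) = insert v (P i) ∧
      ∀ w : V, f (insert w (P i)) - f (P i) ≤ f (P (i + 1)) - f (P i))
    (Pstar : Finset V) (hcard : Pstar.card ≤ k)
    (hopt : ∀ Q : Finset V, Q.card ≤ k → f Q ≤ f Pstar) :
    f (P k) ≥ (1 - 1 / Real.exp 1) * f Pstar := by
  have hkR : (0:ℝ) < (k:ℝ) := by exact_mod_cast hk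
  have hk0 : (k:ℝ) ≠ 0 := ne_of_gt hkR
  have hk1 : (1:ℝ) ≤ (k:ℝ) := by exact_mod_cast hk
  have hc0 : 0 ≤ 1 - 1/(k:ℝ) := by
    have : 1/(k:ℝ) ≤ 1 := by rw [div_le_one hkR]; exact hk1
    linarith
  -- telescoping lemma
  have key : ∀ (S A : Finset V), f (A ∪ S) - f A ≤ ∑ v ∈ S, (f (insert v A) - f A) := by
    intro S
    induction S using Finset.induction_on with
    | empty => intro A; simp
    | @insert v S' hv ih =>
      intro A
      have hsubm : f (insert v (A ∪ S')) - f (A ∪ S') ≤ f (insert v A) - f A := by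
        by_cases hvA : v ∈ A
        · have h1 : insert v (A ∪ S') = A ∪ S' :=
            Finset.insert_eq_self.mpr (Finset.mem_union_left _ hvA)
          have h2 : insert v A = A := Finset.insert_eq_self.mpr hvA
          rw [h1, h2]
          linarith [hmono A (A ∪ S') Finset.subset_union_left]
        · have h := hsub (insert v A) (A ∪ S')
          have hun : insert v A ∪ (A ∪ S') = insert v (A ∪ S') := by
            ext x
            simp only [Finset.mem_insert, Finset.mem_union]
            tauto
          have hint : insert v A ∩ (A ∪ S') = A := by
            ext x
            simp only [Finset.mem_inter, Finset.mem_insert, Finset.mem_union]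
            constructor
            · rintro ⟨h1 | h1, h2 | h2⟩ <;> first | assumption | (subst h1; tauto)
            · intro hx; tauto
          rw [hun, hint] at h
          linarith
      have hsum : (f (insert v A) - f A) + ∑ w ∈ S', (f (insert w A) - f A)
          = ∑ w ∈ insert v S', (f (insert w A) - f A) := by
        rw [Finset.sum_insert hv]
      calc f (A ∪ insert v S') - f A
          = (f (insert v (A ∪ S')) - f (A ∪ S')) + (f (A ∪ S') - f A) := by
            rw [Finset.union_insert]; ring
        _ ≤ (f (insert v A) - f A) + ∑ w ∈ S', (f (insert w A) - f A) :=
            add_le_add hsubm (ih A)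
        _ = ∑ w ∈ insert v S', (f (insert w A) - f A) := hsum
  -- main induction
  have main : ∀ i ≤ k, f Pstar - f (P i) ≤ (1 - 1/(k:ℝ)) ^ i * f Pstar := by
    intro i
    induction i with
    | zero => intro _; simp [hP0, hempty]
    | succ i ih =>
      intro hik
      have hik' : i < k := hik
      have ihi := ih (le_of_lt hik')
      obtain ⟨v, hv, hPsucc, hmax⟩ := hstep i hik'
      have hΔ0 : 0 ≤ f (P (i+1)) - f (P i) := by
        have : P i ⊆ P (i+1) := by rw [hPsucc]; exact Finset.subset_insert _ _
        linarith [hmono _ _ this]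
      have bound : f Pstar - f (P i) ≤ (k:ℝ) * (f (P (i+1)) - f (P i)) := by
        have h1 : f Pstar ≤ f (P i ∪ Pstar) := hmono _ _ Finset.subset_union_right
        have h2 := key Pstar (P i)
        have h3 : ∑ w ∈ Pstar, (f (insert w (P i)) - f (P i))
            ≤ ∑ _w ∈ Pstar, (f (P (i+1)) - f (P i)) :=
          Finset.sum_le_sum fun w _ => hmax w
        have h4 : ∑ _w ∈ Pstar, (f (P (i+1)) - f (P i))
            = (Pstar.card : ℝ) * (f (P (i+1)) - f (P i)) := by
          rw [Finset.sum_const, nsmul_eq_mul]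
        have h5 : (Pstar.card : ℝ) * (f (P (i+1)) - f (P i))
            ≤ (k:ℝ) * (f (P (i+1)) - f (P i)) := by
          apply mul_le_mul_of_nonneg_right _ hΔ0
          exact_mod_cast hcard
        linarith
      have hstep' : f Pstar - f (P (i+1)) ≤ (1 - 1/(k:ℝ)) * (f Pstar - f (P i)) := by
        have hdiv : (f Pstar - f (P i)) / (k:ℝ) ≤ f (P (i+1)) - f (P i) := by
          rw [div_le_iff₀ hkR]; linarith
        have hcg : (1 - 1/(k:ℝ)) * (f Pstar - f (P i))
            = (f Pstar - f (P i)) - (f Pstar - f (P i)) / (k:ℝ) := by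
          field_simp
        linarith
      calc f Pstar - f (P (i+1)) ≤ (1 - 1/(k:ℝ)) * (f Pstar - f (P i)) := hstep'
        _ ≤ (1 - 1/(k:ℝ)) * ((1 - 1/(k:ℝ)) ^ i * f Pstar) :=
            mul_le_mul_of_nonneg_left ihi hc0
        _ = (1 - 1/(k:ℝ)) ^ (i+1) * f Pstar := by ring
  have hfin := main k le_rfl
  have hce : 1 - 1/(k:ℝ) ≤ Real.exp (-(1/(k:ℝ))) := by
    linarith [Real.add_one_le_exp (-(1/(k:ℝ)))]
  have hpow : (1 - 1/(k:ℝ)) ^ k ≤ Real.exp (-(1/(k:ℝ))) ^ k := pow_le_pow_left₀ hc0 hce k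
  have hexp : Real.exp (-(1/(k:ℝ))) ^ k = Real.exp (-1) := by
    rw [← Real.exp_nat_mul]
    congr 1
    field_simp
  have hfP : 0 ≤ f Pstar := hnonneg _
  have hfinal : (1 - 1/(k:ℝ)) ^ k * f Pstar ≤ (1 / Real.exp 1) * f Pstar := by
    apply mul_le_mul_of_nonneg_right _ hfP
    calc (1 - 1/(k:ℝ)) ^ k ≤ Real.exp (-(1/(k:ℝ))) ^ k := hpow
      _ = Real.exp (-1) := hexp
      _ = 1 / Real.exp 1 := by rw [Real.exp_neg]; exact inv_eq_one_div _
  linarith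
end

section
/- Let f : Set V → ℝ≥0 be monotone and submodular with f(∅)=0, and suppose the greedy algorithm uses an approximate oracle: at each of the k steps it selects an element whose marginal gain is within additive error 2α of the maximum marginal gain. Then the output P satisfies f(P) ≥ (1 − 1/e)·f(P*) − 2kα, where P* is an optimal size-k set. -/
theorem approx_greedy_guarantee {V : Type*} [DecidableEq V] [Fintype V]
    (f : Finset V → ℝ) (k : ℕ) (hk : 0 < k) (α : ℝ) (hα : 0 ≤ α)
    (hnonneg : ∀ A, 0 ≤ f A)
    (hmono : ∀ A B : Finset V, A ⊆ B → f A ≤ f B)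
    (hsub : ∀ A B : Finset V, f A + f B ≥ f (A ∪ B) + f (A ∩ B))
    (hempty : f ∅ = 0)
    (P : ℕ → Finset V) (hP0 : P 0 = ∅)
    (hstep : ∀ i < k, ∃ v ∉ P i, P (i + 1) = insert v (P i) ∧
      ∀ w : V, f (insert w (P i)) - f (P i) ≤ f (P (i + 1)) - f (P i) + 2 * α)
    (Pstar : Finset V) (hcard : Pstar.card = k)
    (hopt : ∀ Q : Finset V, Q.card = k → f Q ≤ f Pstar) :
    f (P k) ≥ (1 - 1 / Real.exp 1) * f Pstar - 2 * k * α := by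
  have hkpos : (0:ℝ) < k := by exact_mod_cast hk
  have hfrac : (0:ℝ) ≤ 1 - 1/k := by
    rw [sub_nonneg, div_le_one hkpos]
    exact_mod_cast hk
  have hfrac1 : (1:ℝ) - 1/k ≤ 1 := by
    have : (0:ℝ) ≤ 1/k := by positivity
    linarith
  -- submodular sum lemma
  have key : ∀ (S A : Finset V), f (A ∪ S) - f A ≤ ∑ w ∈ S, (f (insert w A) - f A) := by
    intro S
    induction S using Finset.induction_on with
    | empty => intro A; simp
    | insert _ _ h ih =>
      intro A
      rename_i w S
      rw [Finset.sum_insert h]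
      have h1 := hsub (A ∪ S) (insert w A)
      have h2 : (A ∪ S) ∪ insert w A = A ∪ insert w S := by
        ext x; simp; tauto
      have h3 : A ⊆ (A ∪ S) ∩ insert w A := by
        intro x hx; simp [hx]
      have h4 := hmono _ _ h3
      have h5 := ih A
      rw [h2] at h1
      linarith
  have hstep' : ∀ i < k, f Pstar - f (P (i+1)) ≤ (1 - 1/k) * (f Pstar - f (P i)) + 2*α := by
    intro i hi
    obtain ⟨v, hv, hP1, hmax⟩ := hstep i hi
    set A := P i with hA
    set M := f (P (i+1)) - f A + 2*α with hM
    have hM0 : 0 ≤ M := by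
      have h0 : f A ≤ f (insert v A) := hmono A (insert v A) (Finset.subset_insert _ _)
      have := hmax v
      linarith
    have h1 : f Pstar - f A ≤ (k:ℝ) * M := by
      have h2 : f Pstar ≤ f (A ∪ (Pstar \ A)) := by
        apply hmono
        intro x hx
        by_cases h : x ∈ A <;> simp [h, hx]
      have h3 := key (Pstar \ A) A
      have h4 : ∑ w ∈ Pstar \ A, (f (insert w A) - f A) ≤ ((Pstar \ A).card : ℝ) * M := by
        calc ∑ w ∈ Pstar \ A, (f (insert w A) - f A) ≤ ∑ _w ∈ Pstar \ A, M :=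
              Finset.sum_le_sum (fun w _ => hmax w)
          _ = ((Pstar \ A).card : ℝ) * M := by rw [Finset.sum_const, nsmul_eq_mul]
      have h5 : ((Pstar \ A).card : ℝ) ≤ k := by
        have : (Pstar \ A).card ≤ Pstar.card := Finset.card_le_card Finset.sdiff_subset
        rw [hcard] at this
        exact_mod_cast this
      have h6 : ((Pstar \ A).card : ℝ) * M ≤ k * M := mul_le_mul_of_nonneg_right h5 hM0
      linarith
    have h7 : (1/(k:ℝ)) * (f Pstar - f A) ≤ M := by
      rw [one_div, inv_mul_le_iff₀ hkpos]
      linarith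
    have h8 : (1 - 1/(k:ℝ)) * (f Pstar - f A) = (f Pstar - f A) - (1/(k:ℝ)) * (f Pstar - f A) := by
      ring
    rw [h8]
    linarith
  have main : ∀ n, n ≤ k → f Pstar - f (P n) ≤ (1-1/(k:ℝ))^n * f Pstar + 2*n*α := by
    intro n
    induction n with
    | zero => intro _; simp [hP0, hempty]
    | succ n ih =>
      intro hn
      have hn' : n < k := hn
      have h1 := hstep' n hn'
      have h2 := ih (le_of_lt hn')
      have h3 : (1-1/(k:ℝ)) * (f Pstar - f (P n)) ≤
          (1-1/(k:ℝ)) * ((1-1/(k:ℝ))^n * f Pstar + 2*n*α) :=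
        mul_le_mul_of_nonneg_left h2 hfrac
      have hY : (0:ℝ) ≤ 2*n*α := by positivity
      have h5 : (1-1/(k:ℝ)) * ((1-1/(k:ℝ))^n * f Pstar + 2*n*α) ≤
          (1-1/(k:ℝ))^(n+1) * f Pstar + 2*n*α := by
        have heq : (1-1/(k:ℝ)) * ((1-1/(k:ℝ))^n * f Pstar + 2*n*α)
            = (1-1/(k:ℝ))^(n+1) * f Pstar + (1-1/(k:ℝ)) * (2*n*α) := by ring
        rw [heq]
        nlinarith
      have hcast : (2:ℝ)*(n+1:ℕ)*α = 2*n*α + 2*α := by push_cast; ring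
      rw [hcast]
      linarith
  have hmain := main k le_rfl
  have hpow : (1-1/(k:ℝ))^k ≤ 1 / Real.exp 1 := by
    have h1 : (1-1/(k:ℝ)) ≤ Real.exp (-(1/k)) := by
      have := Real.add_one_le_exp (-(1/(k:ℝ)))
      linarith
    have h2 : (1-1/(k:ℝ))^k ≤ (Real.exp (-(1/(k:ℝ))))^k := pow_le_pow_left₀ hfrac h1 k
    rw [← Real.exp_nat_mul] at h2
    have h3 : (k:ℝ) * (-(1/k)) = -1 := by field_simp
    rw [h3, Real.exp_neg] at h2
    rw [one_div]
    simpa using h2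
  have hfP : 0 ≤ f Pstar := hnonneg _
  have h9 : (1-1/(k:ℝ))^k * f Pstar ≤ (1/Real.exp 1) * f Pstar :=
    mul_le_mul_of_nonneg_right hpow hfP
  have h10 : (1 - 1/Real.exp 1) * f Pstar = f Pstar - (1/Real.exp 1) * f Pstar := by ring
  rw [ge_iff_le, h10]
  linarith
end
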